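/- If M is a principally δ-lifting right R-module, then the factor module M/Rad_δ(M) is principally semisimple, i.e., every cyclic submodule of M/Rad_δ(M) is a direct summand of M/Rad_δ(M). -/

import Mathlib

/-- A submodule `K` of `M` is *essential* in `M` if it has nonzero intersection with
every nonzero submodule of `M`. -/
def IsEssentialSubmodule {R M : Type*} [Ring R] [AddCommGroup M] [Module R M]
    (K : Submodule R M) : Prop :=
  ∀ N : Submodule R M, N ≠ ⊥ → K ⊓ N ≠ ⊥

/-- A module `M` is *singular* if the annihilator of every element of `M` is an
essential ideal of `R`. -/
def IsSingularModule (R M : Type*) [Ring R] [AddCommGroup M] [Module R M] : Prop :=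
  ∀ x : M, IsEssentialSubmodule (LinearMap.ker (LinearMap.toSpanSingleton R M x))

/-- A submodule `N` of `M` is *δ-small* in `M` if whenever `M = N + X` with `M/X`
singular, we have `X = M`. -/
def IsDeltaSmall (R : Type*) {M : Type*} [Ring R] [AddCommGroup M] [Module R M]
    (N : Submodule R M) : Prop :=
  ∀ X : Submodule R M, N ⊔ X = ⊤ → IsSingularModule R (M ⧸ X) → X = ⊤

/-- A module `M` is *principally δ-lifting* if for each `m ∈ M` there is a
decomposition `M = A ⊕ B` with `A ≤ mR` and `mR ∩ B` δ-small in `B`. -/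
def IsPrinDeltaLifting (R M : Type*) [Ring R] [AddCommGroup M] [Module R M] : Prop :=
  ∀ m : M, ∃ A B : Submodule R M, A ≤ Submodule.span R {m} ∧ IsCompl A B ∧
    IsDeltaSmall R ((Submodule.span R {m} ⊓ B).comap B.subtype)

/-- `Rad_δ(M)`: the sum of all δ-small submodules of `M`. -/
def deltaRad (R M : Type*) [Ring R] [AddCommGroup M] [Module R M] : Submodule R M :=
  sSup {N : Submodule R M | IsDeltaSmall R N}

/-- A module is *principally semisimple* if every cyclic submodule is a direct summand. -/
def IsPrinSemisimple (R M : Type*) [Ring R] [AddCommGroup M] [Module R M] : Prop :=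
  ∀ m : M, ∃ B : Submodule R M, IsCompl (Submodule.span R {m}) B

/-!
The image of a δ-small submodule under any linear map is δ-small, so every linear map sends
`Rad_δ(M)` into `Rad_δ` of its codomain; in particular the projections of `M` onto the summands of
a decomposition `M = A ⊕ B` preserve `D := Rad_δ(M)`, which makes the images of `A` and `B` in
`M/D` complementary. Given `m ∈ M`, take the decomposition `M = A ⊕ B` supplied by the
principally δ-lifting property. By the modular law `mR = A ⊕ (mR ∩ B)`, and `mR ∩ B`, being
δ-small in `B`, lies in `D`; hence the image of `mR` in `M/D` is the image of `A`, a direct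
summand.
-/

open Submodule LinearMap

section Singular

variable {R P Q : Type*} [Ring R] [AddCommGroup P] [Module R P] [AddCommGroup Q] [Module R Q]

theorem IsSingularModule.of_injective (hQ : IsSingularModule R Q) (f : P →ₗ[R] Q)
    (hf : Function.Injective f) : IsSingularModule R P := by
  intro x
  rw [← ker_comp_of_ker_eq_bot _ (ker_eq_bot.mpr hf), comp_toSpanSingleton]
  exact hQ (f x)

theorem IsSingularModule.quotient_comap {X : Submodule R Q} (hX : IsSingularModule R (Q ⧸ X))
    (f : P →ₗ[R] Q) : IsSingularModule R (P ⧸ X.comap f) :=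
  hX.of_injective ((X.comap f).mapQ X f le_rfl) <| by
    rw [← ker_eq_bot, ker_mapQ, mkQ_map_self]

end Singular

section DeltaSmall

variable {R M M' : Type*} [Ring R] [AddCommGroup M] [Module R M] [AddCommGroup M'] [Module R M']

theorem IsDeltaSmall.map_of_surjective {N : Submodule R M} (hN : IsDeltaSmall R N)
    (f : M →ₗ[R] M') (hf : Function.Surjective f) : IsDeltaSmall R (N.map f) := by
  intro X hsup hX
  have hker : ker f ≤ N ⊔ X.comap f := (ker_le_comap f).trans le_sup_right
  have hcomap : N ⊔ X.comap f = ⊤ := by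
    rw [← comap_map_eq_self hker, Submodule.map_sup, map_comap_eq_of_surjective hf, hsup,
      comap_top]
  rw [← map_comap_eq_of_surjective hf X, hN _ hcomap (hX.quotient_comap f), Submodule.map_top,
    range_eq_top.mpr hf]

theorem IsDeltaSmall.map_subtype {B : Submodule R M} {N : Submodule R B} (hN : IsDeltaSmall R N) :
    IsDeltaSmall R (N.map B.subtype) := by
  intro X hsup hX
  have hcomap : N ⊔ X.comap B.subtype = ⊤ := by
    apply map_injective_of_injective B.injective_subtype
    rw [Submodule.map_sup, map_comap_subtype, map_subtype_top, inf_comm B X,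
      ← sup_inf_assoc_of_le X (map_subtype_le B N), hsup, top_inf_eq]
  have hBX : B ≤ X := comap_subtype_eq_top.mp (hN _ hcomap (hX.quotient_comap B.subtype))
  rw [eq_top_iff, ← hsup]
  exact sup_le ((map_subtype_le B N).trans hBX) le_rfl

theorem IsDeltaSmall.map {N : Submodule R M} (hN : IsDeltaSmall R N) (f : M →ₗ[R] M') :
    IsDeltaSmall R (N.map f) := by
  have h := (hN.map_of_surjective f.rangeRestrict f.surjective_rangeRestrict).map_subtype
  rwa [← Submodule.map_comp, rangeRestrict, subtype_comp_codRestrict] at h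

theorem IsDeltaSmall.le_deltaRad {N : Submodule R M} (hN : IsDeltaSmall R N) :
    N ≤ deltaRad R M :=
  le_sSup hN

theorem map_deltaRad_le (f : M →ₗ[R] M') : (deltaRad R M).map f ≤ deltaRad R M' :=
  map_le_iff_le_comap.mpr <| sSup_le fun _ hN => map_le_iff_le_comap.mp (hN.map f).le_deltaRad

end DeltaSmall

section Quotient

variable {R M : Type*} [Ring R] [AddCommGroup M] [Module R M] {A B D : Submodule R M}

theorem Submodule.isCompl_map_mkQ (h : IsCompl A B) (hD : D.map (A.projection B h) ≤ D) :
    IsCompl (A.map D.mkQ) (B.map D.mkQ) := by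
  constructor
  · rw [disjoint_def]
    rintro _ ⟨a, ha, rfl⟩ ⟨b, hb, hba⟩
    have hab : a - b ∈ D := (Quotient.eq D).mp hba.symm
    have hproj : A.projection B h (a - b) = a := by
      rw [map_sub, projection_apply_of_mem_left h ha, projection_apply_of_mem_right h hb, sub_zero]
    exact (Quotient.mk_eq_zero D).mpr (hproj ▸ hD (mem_map_of_mem hab))
  · rw [codisjoint_iff, ← Submodule.map_sup, h.sup_eq_top, Submodule.map_top, range_mkQ]

theorem Submodule.map_mkQ_eq_of_isCompl {C : Submodule R M} (h : IsCompl A B) (hAC : A ≤ C)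
    (hCB : C ⊓ B ≤ D) : C.map D.mkQ = A.map D.mkQ := by
  have hC : C = A ⊔ C ⊓ B := by
    rw [inf_comm, ← sup_inf_assoc_of_le B hAC, h.sup_eq_top, top_inf_eq]
  have hCB' : (C ⊓ B).map D.mkQ = ⊥ := le_bot_iff.mp ((map_mono hCB).trans_eq (mkQ_map_self D))
  rw [hC, Submodule.map_sup, hCB', sup_bot_eq]

end Quotient

theorem quotient_deltaRad_isPrinSemisimple
    {R M : Type*} [Ring R] [AddCommGroup M] [Module R M]
    (hM : IsPrinDeltaLifting R M) :
    IsPrinSemisimple R (M ⧸ deltaRad R M) := by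
  intro x
  obtain ⟨m, rfl⟩ := Submodule.Quotient.mk_surjective (deltaRad R M) x
  obtain ⟨A, B, hAm, hAB, hsmall⟩ := hM m
  have hmB : span R {m} ⊓ B ≤ deltaRad R M := by
    have h := (hsmall.map B.subtype).le_deltaRad
    rwa [map_comap_subtype, inf_comm, inf_assoc, inf_idem] at h
  refine ⟨B.map (deltaRad R M).mkQ, ?_⟩
  rw [← mkQ_apply, ← Set.image_singleton, ← Submodule.map_span,
    map_mkQ_eq_of_isCompl hAB hAm hmB]
  exact isCompl_map_mkQ hAB (map_deltaRad_le _)
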